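/- Let k ≥ 25 and let F_k be the graph obtained from the ladder graph L_k (with vertices a₁,…,a_k, b₁,…,b_k, edges aᵢbᵢ for 1 ≤ i ≤ k and aᵢa_{i+1}, bᵢb_{i+1} for 1 ≤ i < k) by adding the edge b_k b_{k−24}. Then for every 2-subcoloring μ of F_k one has μ(a₁) ≠ μ(b₁). -/
import Mathlib


/-- A `k`-subcoloring of a simple graph `G`: every color class induces a
disjoint union of cliques. -/
def IsSubcoloring {V : Type*} {k : ℕ} (G : SimpleGraph V) (μ : V → Fin k) : Prop :=
  ∀ u v w : V, μ u = μ v → μ v = μ w → G.Adj u v → G.Adj v w → u ≠ w → G.Adj u w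

/-- The forbidding gadget `F_k` (for `k ≥ 25`) is the ladder graph of length `k`
(vertices `(i, false) = a_{i+1}` and `(i, true) = b_{i+1}`, 0-indexed) together
with the extra edge `b_k b_{k-24}`.  In any 2-subcoloring, the two ports `a₁`
and `b₁` receive different colors. -/
theorem forbidding_gadget_ports_differ
    (k : ℕ) (hk : 25 ≤ k) (G : SimpleGraph (Fin k × Bool))
    (hG : ∀ p q : Fin k × Bool, G.Adj p q ↔
      ((p.1 = q.1 ∧ p.2 ≠ q.2) ∨
        (((p.1 : ℕ) + 1 = (q.1 : ℕ) ∨ (q.1 : ℕ) + 1 = (p.1 : ℕ)) ∧ p.2 = q.2) ∨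
        (p.2 = true ∧ q.2 = true ∧
          (((p.1 : ℕ) = k - 1 ∧ (q.1 : ℕ) = k - 25) ∨
            ((p.1 : ℕ) = k - 25 ∧ (q.1 : ℕ) = k - 1)))))
    (μ : Fin k × Bool → Fin 2) (hμ : IsSubcoloring G μ) :
    μ (⟨0, by omega⟩, false) ≠ μ (⟨0, by omega⟩, true) := by
  intro h0
  have fin2 : ∀ a x y : Fin 2, a ≠ x → a ≠ y → x = y := by decide
  have rung : ∀ i : Fin k, G.Adj (i, false) (i, true) := by
    intro i; rw [hG]; simp
  have step : ∀ (i : ℕ) (h : i < k) (h' : i + 1 < k) (b : Bool),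
      G.Adj (⟨i, h⟩, b) (⟨i + 1, h'⟩, b) := by
    intro i h h' b; rw [hG]; simp
  -- If column i is monochromatic, colors must flip along both rails.
  have L1 : ∀ (i : ℕ) (h : i < k) (h' : i + 1 < k),
      μ (⟨i, h⟩, false) = μ (⟨i, h⟩, true) →
      (μ (⟨i, h⟩, false) ≠ μ (⟨i + 1, h'⟩, false) ∧
        μ (⟨i, h⟩, true) ≠ μ (⟨i + 1, h'⟩, true)) := by
    intro i h h' hm
    constructor
    · intro he
      have hadj := hμ (⟨i + 1, h'⟩, false) (⟨i, h⟩, false) (⟨i, h⟩, true)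
        he.symm hm ((step i h h' false).symm) (rung ⟨i, h⟩) (by simp)
      rw [hG] at hadj
      simp [Fin.ext_iff] at hadj
    · intro he
      have hadj := hμ (⟨i + 1, h'⟩, true) (⟨i, h⟩, true) (⟨i, h⟩, false)
        he.symm hm.symm ((step i h h' true).symm) (rung ⟨i, h⟩).symm (by simp)
      rw [hG] at hadj
      simp [Fin.ext_iff] at hadj
  -- Every column is monochromatic.
  have mono : ∀ (i : ℕ) (h : i < k), μ (⟨i, h⟩, false) = μ (⟨i, h⟩, true) := by
    intro i
    induction i with
    | zero => intro h; exact h0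
    | succ n ih =>
      intro h
      have hn : n < k := by omega
      obtain ⟨h1, h2⟩ := L1 n hn h (ih hn)
      exact fin2 (μ (⟨n, hn⟩, false)) _ _ h1 ((ih hn) ▸ h2)
  -- Parity: b-colors repeat with period 2.
  have par : ∀ (j i : ℕ) (h : i + 2 * j < k),
      μ (⟨i, by omega⟩, true) = μ (⟨i + 2 * j, h⟩, true) := by
    intro j
    induction j with
    | zero => intro i h; rfl
    | succ m ih =>
      intro i h
      have h1 : i + 2 * m < k := by omega
      have h2 : i + 2 * m + 1 < k := by omega
      have e : (⟨i + 2 * (m + 1), h⟩ : Fin k) = ⟨i + 2 * m + 2, by omega⟩ := by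
        ext; simp; ring
      rw [e]
      have hma := mono (i + 2 * m) h1
      have hmb := mono (i + 2 * m + 1) h2
      have p1 := (L1 (i + 2 * m) h1 h2 hma).2
      have p2 := (L1 (i + 2 * m + 1) h2 (by omega) hmb).2
      have : μ (⟨i + 2 * m, h1⟩, true) = μ (⟨i + 2 * m + 2, by omega⟩, true) :=
        fin2 (μ (⟨i + 2 * m + 1, h2⟩, true)) _ _ (fun e => p1 e.symm) p2
      exact (ih i h1).trans this
  -- The chord gives a monochromatic induced path, contradiction.
  have h25 : k - 25 < k := by omega
  have h1 : k - 1 < k := by omega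
  have e : (⟨k - 25 + 2 * 12, by omega⟩ : Fin k) = ⟨k - 1, h1⟩ := by
    ext; simp; omega
  have hpar : μ (⟨k - 25, h25⟩, true) = μ (⟨k - 1, h1⟩, true) := by
    have := par 12 (k - 25) (by omega)
    rwa [e] at this
  have hadjchord : G.Adj (⟨k - 1, h1⟩, true) (⟨k - 25, h25⟩, true) := by
    rw [hG]; simp
  have hadj := hμ (⟨k - 1, h1⟩, false) (⟨k - 1, h1⟩, true) (⟨k - 25, h25⟩, true)
    (mono (k - 1) h1) hpar.symm (rung _) hadjchord
    (by simp)
  rw [hG] at hadj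
  simp [Fin.ext_iff] at hadj
  omega
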